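/- (Moments of the bivariate operator.) For i = 1, 2 let 0<q_i<1, 0 ≤ α ≤ β, n_i ≥ 1, m_i ≥ 1, φ_i : ℝ → ℝ, and x, y ≥ 0. Assume for each i that the weights w^{(i)}_k are nonnegative at the relevant point (x for i=1, y for i=2) and that the moment identities (M) hold, at x for the operator built from (q_1, n_1, φ_1, m_1), and at y for the operator built from (q_2, n_2, φ_2, m_2). Then the bivariate operator satisfies: L*_{n_1,n_2}(1; q_1, q_2, x, y) = 1; L*_{n_1,n_2}((u,v) ↦ u) = [n_1]_{q_1}x/([n_1]_{q_1}+β) + q_1(1+2α)/([2]_{q_1}([n_1]_{q_1}+β)); L*_{n_1,n_2}((u,v) ↦ v) = [n_2]_{q_2}y/([n_2]_{q_2}+β) + q_2(1+2α)/([2]_{q_2}([n_2]_{q_2}+β)); and L*_{n_1,n_2}((u,v) ↦ u²+v²) equals the sum of the two corresponding univariate second-moment expressions, i.e. ([n_1]_{q_1}[m_1]_{q_1}x²/(q_1([n_1]_{q_1}+β)²) + [n_1]_{q_1}([3]_{q_1}+q_1((1+3α)[2]_{q_1}+1))x/([3]_{q_1}([n_1]_{q_1}+β)²) + q_1²(1+3α+3α²)/([3]_{q_1}([n_1]_{q_1}+β)²))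 + ([n_2]_{q_2}[m_2]_{q_2}y²/(q_2([n_2]_{q_2}+β)²) + [n_2]_{q_2}([3]_{q_2}+q_2((1+3α)[2]_{q_2}+1))y/([3]_{q_2}([n_2]_{q_2}+β)²) + q_2²(1+3α+3α²)/([3]_{q_2}([n_2]_{q_2}+β)²)). -/
import Mathlib


open scoped BigOperators

noncomputable section

/-- The `q`-integer `[n]_q = ∑_{i=0}^{n-1} q^i`. -/
def qInt (q : ℝ) (n : ℕ) : ℝ := ∑ i ∈ Finset.range n, q ^ i

/-- The `q`-factorial `[n]_q! = ∏_{j=1}^{n} [j]_q`. -/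
def qFact (q : ℝ) (n : ℕ) : ℝ := ∏ j ∈ Finset.range n, qInt q (j + 1)

/-- The `q`-Jackson integral `∫_0^c g(t) d_q t = (1-q) c ∑_{j=0}^∞ q^j g (c q^j)`. -/
def jackson0 (q c : ℝ) (g : ℝ → ℝ) : ℝ := (1 - q) * c * ∑' j : ℕ, q ^ j * g (c * q ^ j)

/-- The `q`-Jackson integral `∫_a^b g(t) d_q t`. -/
def jackson (q a b : ℝ) (g : ℝ → ℝ) : ℝ := jackson0 q b g - jackson0 q a g

/-- The `q`-derivative operator, with the convention `(D_q g)(0) = 0`. -/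
def qD (q : ℝ) (g : ℝ → ℝ) : ℝ → ℝ := fun x =>
  if x = 0 then 0 else (g x - g (q * x)) / ((1 - q) * x)

/-- The weights `w_k(x) = q^{k(k-1)/2} (D_q^k φ)(x) (−x)^k / [k]_q!`. -/
def w (q : ℝ) (φ : ℝ → ℝ) (k : ℕ) (x : ℝ) : ℝ :=
  q ^ (k * (k - 1) / 2) * ((qD q)^[k] φ) x * (-x) ^ k / qFact q k

/-- Lower node `a_k = q([k]_q + q^{k-1} α)/([n]_q + β)`. -/
def aNode (q α β : ℝ) (n k : ℕ) : ℝ :=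
  q * (qInt q k + q ^ ((k : ℤ) - 1) * α) / (qInt q n + β)

/-- Upper node `b_k = ([k+1]_q + q^k α)/([n]_q + β)`. -/
def bNode (q α β : ℝ) (n k : ℕ) : ℝ :=
  (qInt q (k + 1) + q ^ k * α) / (qInt q n + β)

/-- The Stancu type `q`-Baskakov–Kantorovich operator
`L*_n(f; q, x) = ([n]_q + β) ∑_{k=0}^∞ w_k(x) ∫_{a_k}^{b_k} f(q^{1-k} t) d_q t`. -/
def Lop (q α β : ℝ) (n : ℕ) (φ : ℝ → ℝ) (f : ℝ → ℝ) (x : ℝ) : ℝ :=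
  (qInt q n + β) * ∑' k : ℕ, w q φ k x *
    jackson q (aNode q α β n k) (bNode q α β n k) (fun t => f (q ^ (1 - (k : ℤ)) * t))

/-- The moment identities (M) at `x` with parameter `m`. -/
def MomentM (q α β : ℝ) (n m : ℕ) (φ : ℝ → ℝ) (x : ℝ) : Prop :=
  Lop q α β n φ (fun _ => 1) x = 1 ∧
  Lop q α β n φ (fun t => t) x =
    qInt q n * x / (qInt q n + β) + q * (1 + 2 * α) / (qInt q 2 * (qInt q n + β)) ∧
  Lop q α β n φ (fun t => t ^ 2) x =
    qInt q n * qInt q m * x ^ 2 / (q * (qInt q n + β) ^ 2)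
      + qInt q n * (qInt q 3 + q * ((1 + 3 * α) * qInt q 2 + 1)) * x
          / (qInt q 3 * (qInt q n + β) ^ 2)
      + q ^ 2 * (1 + 3 * α + 3 * α ^ 2) / (qInt q 3 * (qInt q n + β) ^ 2)

/-- The quantity `δ_n(x)`. -/
def deltaN (q α β : ℝ) (n m : ℕ) (x : ℝ) : ℝ :=
  (qInt q n * qInt q m / (q * (qInt q n + β) ^ 2) + 1 - 2 * qInt q n / (qInt q n + β)) * x ^ 2
  + (qInt q n * (qInt q 3 + q * ((1 + 3 * α) * qInt q 2 + 1))
        / (qInt q 3 * (qInt q n + β) ^ 2)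
      - 2 * q * (1 + 2 * α) / (qInt q 2 * (qInt q n + β))) * x
  + q ^ 2 * (1 + 3 * α + 3 * α ^ 2) / (qInt q 3 * (qInt q n + β) ^ 2)

open scoped Classical in
/-- Statistical convergence of a real sequence. -/
def StatLim (x : ℕ → ℝ) (L : ℝ) : Prop :=
  ∀ ε > 0, Filter.Tendsto
    (fun n => (((Finset.range n).filter (fun j => ε ≤ |x j - L|)).card : ℝ) / n)
    Filter.atTop (nhds 0)

open scoped Classical in
/-- Statistical convergence of a real double sequence. -/
def StatLim2 (x : ℕ → ℕ → ℝ) (L : ℝ) : Prop :=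
  ∀ ε > 0, Filter.Tendsto
    (fun p : ℕ × ℕ =>
      (((Finset.range p.1 ×ˢ Finset.range p.2).filter
          (fun jk => ε ≤ |x jk.1 jk.2 - L|)).card : ℝ) / (p.1 * p.2))
    Filter.atTop (nhds 0)

/-- Condition (d) on a sequence `(q_n) ⊂ (0,1)`. -/
def CondD (q : ℕ → ℝ) : Prop :=
  StatLim q 1 ∧ (∃ a < (1 : ℝ), StatLim (fun n => q n ^ n) a) ∧
    StatLim (fun n => 1 / qInt (q n) n) 0

/-- Modulus of continuity on `[0,∞)`. -/
def omegaMod (f : ℝ → ℝ) (δ : ℝ) : ℝ :=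
  sSup {d | ∃ t s : ℝ, 0 ≤ t ∧ 0 ≤ s ∧ |t - s| ≤ δ ∧ d = |f t - f s|}

/-- Bivariate modulus of continuity on `[0,∞) × [0,∞)`. -/
def omegaMod2 (f : ℝ → ℝ → ℝ) (δ₁ δ₂ : ℝ) : ℝ :=
  sSup {d | ∃ x' y' x y : ℝ, 0 ≤ x' ∧ 0 ≤ y' ∧ 0 ≤ x ∧ 0 ≤ y ∧
    |x' - x| ≤ δ₁ ∧ |y' - y| ≤ δ₂ ∧ d = |f x' y' - f x y|}

/-- The bivariate Stancu type `q`-Baskakov–Kantorovich operator. -/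
def Lop2 (q₁ q₂ α β : ℝ) (n₁ n₂ : ℕ) (φ₁ φ₂ : ℝ → ℝ) (f : ℝ → ℝ → ℝ) (x y : ℝ) : ℝ :=
  (qInt q₁ n₁ + β) * (qInt q₂ n₂ + β) *
    ∑' k₁ : ℕ, ∑' k₂ : ℕ, w q₁ φ₁ k₁ x * w q₂ φ₂ k₂ y *
      jackson q₁ (aNode q₁ α β n₁ k₁) (bNode q₁ α β n₁ k₁) (fun t =>
        jackson q₂ (aNode q₂ α β n₂ k₂) (bNode q₂ α β n₂ k₂) (fun s =>
          f (q₁ ^ (1 - (k₁ : ℤ)) * t) (q₂ ^ (1 - (k₂ : ℤ)) * s)))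

lemma geom_shape (q c C : ℝ) (p : ℕ) :
    (fun j : ℕ => q ^ j * (C * (c * q ^ j) ^ p)) = fun j => (C * c ^ p) * (q ^ (p+1)) ^ j := by
  funext j
  rw [mul_pow, ← pow_mul, ← pow_mul]
  ring

lemma summable_geom_mono (q : ℝ) (hq0 : 0 ≤ q) (hq1 : q < 1) (c C : ℝ) (p : ℕ) :
    Summable (fun j : ℕ => q ^ j * (C * (c * q ^ j) ^ p)) := by
  rw [geom_shape]
  exact (summable_geometric_of_lt_one (pow_nonneg hq0 _) (pow_lt_one₀ hq0 hq1 (Nat.succ_ne_zero p))).mul_left _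

lemma jackson0_mono (q : ℝ) (hq0 : 0 ≤ q) (hq1 : q < 1) (c C : ℝ) (p : ℕ) :
    jackson0 q c (fun t => C * t ^ p) = C * c ^ (p+1) * (1 - q) / (1 - q ^ (p+1)) := by
  have hlt : q ^ (p+1) < 1 := pow_lt_one₀ hq0 hq1 (Nat.succ_ne_zero p)
  have hne : 1 - q ^ (p+1) ≠ 0 := by nlinarith
  unfold jackson0
  rw [geom_shape, tsum_mul_left, tsum_geometric_of_lt_one (pow_nonneg hq0 _) hlt]
  field_simp
  ring

lemma jackson_mono (q : ℝ) (hq0 : 0 ≤ q) (hq1 : q < 1) (a b C : ℝ) (p : ℕ) :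
    jackson q a b (fun t => C * t ^ p) = C * (b ^ (p+1) - a ^ (p+1)) * (1 - q) / (1 - q ^ (p+1)) := by
  unfold jackson
  rw [jackson0_mono q hq0 hq1, jackson0_mono q hq0 hq1]
  ring

lemma jackson_add2 (q : ℝ) (hq0 : 0 ≤ q) (hq1 : q < 1) (a b C₁ C₂ : ℝ) (p₁ p₂ : ℕ) :
    jackson q a b (fun t => C₁ * t ^ p₁ + C₂ * t ^ p₂) =
      jackson q a b (fun t => C₁ * t ^ p₁) + jackson q a b (fun t => C₂ * t ^ p₂) := by
  have key : ∀ c : ℝ, jackson0 q c (fun t => C₁ * t ^ p₁ + C₂ * t ^ p₂) =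
      jackson0 q c (fun t => C₁ * t ^ p₁) + jackson0 q c (fun t => C₂ * t ^ p₂) := by
    intro c
    unfold jackson0
    rw [show (fun j : ℕ => q ^ j * (C₁ * (c * q ^ j) ^ p₁ + C₂ * (c * q ^ j) ^ p₂)) =
        (fun j : ℕ => q ^ j * (C₁ * (c * q ^ j) ^ p₁) + q ^ j * (C₂ * (c * q ^ j) ^ p₂)) by
        funext j; ring]
    rw [Summable.tsum_add (summable_geom_mono q hq0 hq1 c C₁ p₁) (summable_geom_mono q hq0 hq1 c C₂ p₂)]
    ring
  unfold jackson
  rw [key, key]; ring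

lemma jackson_mul_left (q a b C : ℝ) (g : ℝ → ℝ) :
    jackson q a b (fun t => C * g t) = C * jackson q a b g := by
  have key : ∀ c : ℝ, jackson0 q c (fun t => C * g t) = C * jackson0 q c g := by
    intro c
    unfold jackson0
    rw [show (fun j : ℕ => q ^ j * (C * g (c * q ^ j))) =
        (fun j : ℕ => C * (q ^ j * g (c * q ^ j))) by funext j; ring, tsum_mul_left]
    ring
  unfold jackson
  rw [key, key]; ring

lemma jackson_mul_right (q a b C : ℝ) (g : ℝ → ℝ) :
    jackson q a b (fun t => g t * C) = jackson q a b g * C := by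
  rw [show (fun t => g t * C) = (fun t => C * g t) by funext t; ring, jackson_mul_left]; ring

lemma Lop2_prod (q₁ q₂ α β : ℝ) (n₁ n₂ : ℕ) (φ₁ φ₂ : ℝ → ℝ) (g h : ℝ → ℝ) (x y : ℝ) :
    Lop2 q₁ q₂ α β n₁ n₂ φ₁ φ₂ (fun u v => g u * h v) x y =
      Lop q₁ α β n₁ φ₁ g x * Lop q₂ α β n₂ φ₂ h y := by
  unfold Lop2 Lop
  have hjk : ∀ k₁ k₂ : ℕ,
      jackson q₁ (aNode q₁ α β n₁ k₁) (bNode q₁ α β n₁ k₁) (fun t =>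
        jackson q₂ (aNode q₂ α β n₂ k₂) (bNode q₂ α β n₂ k₂) (fun s =>
          g (q₁ ^ (1 - (k₁ : ℤ)) * t) * h (q₂ ^ (1 - (k₂ : ℤ)) * s))) =
      jackson q₁ (aNode q₁ α β n₁ k₁) (bNode q₁ α β n₁ k₁)
          (fun t => g (q₁ ^ (1 - (k₁ : ℤ)) * t)) *
        jackson q₂ (aNode q₂ α β n₂ k₂) (bNode q₂ α β n₂ k₂)
          (fun s => h (q₂ ^ (1 - (k₂ : ℤ)) * s)) := by
    intro k₁ k₂
    have inner : (fun t : ℝ =>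
        jackson q₂ (aNode q₂ α β n₂ k₂) (bNode q₂ α β n₂ k₂) (fun s =>
          g (q₁ ^ (1 - (k₁ : ℤ)) * t) * h (q₂ ^ (1 - (k₂ : ℤ)) * s))) =
        (fun t : ℝ => g (q₁ ^ (1 - (k₁ : ℤ)) * t) *
          jackson q₂ (aNode q₂ α β n₂ k₂) (bNode q₂ α β n₂ k₂)
            (fun s => h (q₂ ^ (1 - (k₂ : ℤ)) * s))) := by
      funext t
      exact jackson_mul_left _ _ _ _ _
    rw [inner, jackson_mul_right]
  have step : ∀ k₁ : ℕ, (∑' k₂ : ℕ, w q₁ φ₁ k₁ x * w q₂ φ₂ k₂ y *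
      jackson q₁ (aNode q₁ α β n₁ k₁) (bNode q₁ α β n₁ k₁) (fun t =>
        jackson q₂ (aNode q₂ α β n₂ k₂) (bNode q₂ α β n₂ k₂) (fun s =>
          g (q₁ ^ (1 - (k₁ : ℤ)) * t) * h (q₂ ^ (1 - (k₂ : ℤ)) * s)))) =
      (w q₁ φ₁ k₁ x * jackson q₁ (aNode q₁ α β n₁ k₁) (bNode q₁ α β n₁ k₁)
          (fun t => g (q₁ ^ (1 - (k₁ : ℤ)) * t))) *
        ∑' k₂ : ℕ, w q₂ φ₂ k₂ y * jackson q₂ (aNode q₂ α β n₂ k₂) (bNode q₂ α β n₂ k₂)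
          (fun s => h (q₂ ^ (1 - (k₂ : ℤ)) * s)) := by
    intro k₁
    rw [← tsum_mul_left]
    congr 1
    funext k₂
    rw [hjk k₁ k₂]
    ring
  calc (qInt q₁ n₁ + β) * (qInt q₂ n₂ + β) * ∑' k₁ : ℕ, ∑' k₂ : ℕ,
        w q₁ φ₁ k₁ x * w q₂ φ₂ k₂ y *
        jackson q₁ (aNode q₁ α β n₁ k₁) (bNode q₁ α β n₁ k₁) (fun t =>
          jackson q₂ (aNode q₂ α β n₂ k₂) (bNode q₂ α β n₂ k₂) (fun s =>
            g (q₁ ^ (1 - (k₁ : ℤ)) * t) * h (q₂ ^ (1 - (k₂ : ℤ)) * s)))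
      = (qInt q₁ n₁ + β) * (qInt q₂ n₂ + β) * ((∑' k₁ : ℕ, w q₁ φ₁ k₁ x *
          jackson q₁ (aNode q₁ α β n₁ k₁) (bNode q₁ α β n₁ k₁)
            (fun t => g (q₁ ^ (1 - (k₁ : ℤ)) * t))) *
        ∑' k₂ : ℕ, w q₂ φ₂ k₂ y * jackson q₂ (aNode q₂ α β n₂ k₂) (bNode q₂ α β n₂ k₂)
          (fun s => h (q₂ ^ (1 - (k₂ : ℤ)) * s))) := by
        congr 1
        rw [← tsum_mul_right]
        congr 1
        funext k₁
        exact step k₁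
    _ = _ := by ring
lemma qInt_nonneg (q : ℝ) (hq : 0 ≤ q) (n : ℕ) : 0 ≤ qInt q n :=
  Finset.sum_nonneg fun i _ => pow_nonneg hq i

lemma qInt_pos (q : ℝ) (hq : 0 < q) (n : ℕ) (hn : 1 ≤ n) : 0 < qInt q n :=
  Finset.sum_pos (fun i _ => pow_pos hq i) (by simp [Finset.nonempty_range_iff]; omega)

lemma qInt_succ (q : ℝ) (k : ℕ) : qInt q (k + 1) = 1 + q * qInt q k := by
  unfold qInt
  rw [Finset.sum_range_succ']
  simp only [pow_zero, pow_succ']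
  rw [← Finset.mul_sum]
  ring

lemma q_zpow_succ (q : ℝ) (hq : q ≠ 0) (k : ℕ) : q * q ^ ((k : ℤ) - 1) = q ^ k := by
  have : q ^ (1 : ℤ) * q ^ ((k : ℤ) - 1) = q ^ ((k : ℤ)) := by
    rw [← zpow_add₀ hq]; norm_num
  simpa [zpow_natCast] using this

lemma aNode_nonneg (q α β : ℝ) (hq : 0 < q) (hα : 0 ≤ α) (hβ : 0 ≤ β) (n k : ℕ) :
    0 ≤ aNode q α β n k := by
  unfold aNode
  apply div_nonneg
  · exact mul_nonneg hq.le (add_nonneg (qInt_nonneg q hq.le k)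
      (mul_nonneg (zpow_pos hq _).le hα))
  · exact add_nonneg (qInt_nonneg q hq.le n) hβ

lemma aNode_le_bNode (q α β : ℝ) (hq : 0 < q) (hα : 0 ≤ α) (hβ : 0 ≤ β) (n k : ℕ)
    (hn : 1 ≤ n) : aNode q α β n k ≤ bNode q α β n k := by
  have hc : 0 < qInt q n + β := add_pos_of_pos_of_nonneg (qInt_pos q hq n hn) hβ
  unfold aNode bNode
  gcongr
  have h1 : q * qInt q k = qInt q (k + 1) - 1 := by rw [qInt_succ]; ring
  have h2 : q * (q ^ ((k : ℤ) - 1) * α) = q ^ k * α := by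
    rw [← mul_assoc, q_zpow_succ q hq.ne' k]
  nlinarith [h1, h2]

lemma Summable.of_tsum_ne_zero {f : ℕ → ℝ} (h : ∑' k, f k ≠ 0) : Summable f := by
  by_contra hs; exact h (tsum_eq_zero_of_not_summable hs)
/-- Value of `∫ 1` over `[a_k, b_k]`. -/
def Aterm (q α β : ℝ) (n k : ℕ) : ℝ := bNode q α β n k - aNode q α β n k

/-- Value of `∫ (q^{1-k} t)²` over `[a_k, b_k]`. -/
def Cterm (q α β : ℝ) (n k : ℕ) : ℝ :=
  (q ^ (1 - (k : ℤ))) ^ 2 * ((bNode q α β n k) ^ 3 - (aNode q α β n k) ^ 3) * (1 - q)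
    / (1 - q ^ 3)

lemma jackson_one (q : ℝ) (hq0 : 0 ≤ q) (hq1 : q < 1) (a b : ℝ) :
    jackson q a b (fun _ => (1 : ℝ)) = b - a := by
  have h : (fun _ : ℝ => (1 : ℝ)) = fun t : ℝ => 1 * t ^ 0 := by funext t; simp
  have hne : (1 : ℝ) - q ≠ 0 := by intro h'; nlinarith
  rw [h, jackson_mono q hq0 hq1]
  simp only [pow_one, zero_add, pow_zero]
  field_simp

lemma jackson_sq (q : ℝ) (hq0 : 0 ≤ q) (hq1 : q < 1) (a b Q : ℝ) :
    jackson q a b (fun t => (Q * t) ^ 2) = Q ^ 2 * (b ^ 3 - a ^ 3) * (1 - q) / (1 - q ^ 3) := by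
  have h : (fun t : ℝ => (Q * t) ^ 2) = fun t : ℝ => Q ^ 2 * t ^ 2 := by funext t; ring
  rw [h, jackson_mono q hq0 hq1]

lemma jackson_sq_add (q : ℝ) (hq0 : 0 ≤ q) (hq1 : q < 1) (a b C K : ℝ) :
    jackson q a b (fun s => C + K * s ^ 2) =
      C * (b - a) + K * (b ^ 3 - a ^ 3) * (1 - q) / (1 - q ^ 3) := by
  have h : (fun s : ℝ => C + K * s ^ 2) = fun s : ℝ => C * s ^ 0 + K * s ^ 2 := by
    funext s; simp
  have hne : (1 : ℝ) - q ≠ 0 := by intro h'; nlinarith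
  rw [h, jackson_add2 q hq0 hq1, jackson_mono q hq0 hq1, jackson_mono q hq0 hq1]
  simp only [pow_one, zero_add, pow_zero]
  field_simp

lemma jackson2_key (q₁ q₂ α β : ℝ) (hq₁0 : 0 ≤ q₁) (hq₁1 : q₁ < 1) (hq₂0 : 0 ≤ q₂)
    (hq₂1 : q₂ < 1) (n₁ n₂ k₁ k₂ : ℕ) :
    jackson q₁ (aNode q₁ α β n₁ k₁) (bNode q₁ α β n₁ k₁) (fun t =>
      jackson q₂ (aNode q₂ α β n₂ k₂) (bNode q₂ α β n₂ k₂) (fun s =>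
        (q₁ ^ (1 - (k₁ : ℤ)) * t) ^ 2 + (q₂ ^ (1 - (k₂ : ℤ)) * s) ^ 2)) =
    Cterm q₁ α β n₁ k₁ * Aterm q₂ α β n₂ k₂ + Aterm q₁ α β n₁ k₁ * Cterm q₂ α β n₂ k₂ := by
  have hin : (fun t : ℝ =>
      jackson q₂ (aNode q₂ α β n₂ k₂) (bNode q₂ α β n₂ k₂) (fun s =>
        (q₁ ^ (1 - (k₁ : ℤ)) * t) ^ 2 + (q₂ ^ (1 - (k₂ : ℤ)) * s) ^ 2)) =
      (fun t : ℝ => Cterm q₂ α β n₂ k₂ +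
        ((q₁ ^ (1 - (k₁ : ℤ))) ^ 2 * Aterm q₂ α β n₂ k₂) * t ^ 2) := by
    funext t
    have h : (fun s : ℝ => (q₁ ^ (1 - (k₁ : ℤ)) * t) ^ 2 + (q₂ ^ (1 - (k₂ : ℤ)) * s) ^ 2) =
        fun s : ℝ => (q₁ ^ (1 - (k₁ : ℤ)) * t) ^ 2 + (q₂ ^ (1 - (k₂ : ℤ))) ^ 2 * s ^ 2 := by
      funext s; ring
    rw [h, jackson_sq_add q₂ hq₂0 hq₂1]
    unfold Cterm Aterm
    ring
  rw [hin, jackson_sq_add q₁ hq₁0 hq₁1]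
  unfold Cterm Aterm
  ring

lemma Lop_one_eq (q α β : ℝ) (hq0 : 0 ≤ q) (hq1 : q < 1) (n : ℕ) (φ : ℝ → ℝ) (x : ℝ) :
    Lop q α β n φ (fun _ => 1) x = (qInt q n + β) * ∑' k : ℕ, w q φ k x * Aterm q α β n k := by
  simp only [Lop]
  congr 1
  apply tsum_congr
  intro k
  congr 1
  exact jackson_one q hq0 hq1 _ _ |>.trans rfl

lemma Lop_sq_eq (q α β : ℝ) (hq0 : 0 ≤ q) (hq1 : q < 1) (n : ℕ) (φ : ℝ → ℝ) (x : ℝ) :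
    Lop q α β n φ (fun t => t ^ 2) x =
      (qInt q n + β) * ∑' k : ℕ, w q φ k x * Cterm q α β n k := by
  simp only [Lop]
  congr 1
  apply tsum_congr
  intro k
  congr 1
  exact jackson_sq q hq0 hq1 _ _ _ |>.trans rfl
theorem stmt15 (q₁ q₂ α β : ℝ) (hq₁0 : 0 < q₁) (hq₁1 : q₁ < 1) (hq₂0 : 0 < q₂)
    (hq₂1 : q₂ < 1) (hα : 0 ≤ α) (hαβ : α ≤ β)
    (n₁ n₂ m₁ m₂ : ℕ) (hn₁ : 1 ≤ n₁) (hn₂ : 1 ≤ n₂) (hm₁ : 1 ≤ m₁) (hm₂ : 1 ≤ m₂)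
    (φ₁ φ₂ : ℝ → ℝ) (x y : ℝ) (hx : 0 ≤ x) (hy : 0 ≤ y)
    (hw₁ : ∀ k, 0 ≤ w q₁ φ₁ k x) (hw₂ : ∀ k, 0 ≤ w q₂ φ₂ k y)
    (hM₁ : MomentM q₁ α β n₁ m₁ φ₁ x) (hM₂ : MomentM q₂ α β n₂ m₂ φ₂ y) :
    Lop2 q₁ q₂ α β n₁ n₂ φ₁ φ₂ (fun _ _ => 1) x y = 1 ∧
    Lop2 q₁ q₂ α β n₁ n₂ φ₁ φ₂ (fun u _ => u) x y =
      qInt q₁ n₁ * x / (qInt q₁ n₁ + β)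
        + q₁ * (1 + 2 * α) / (qInt q₁ 2 * (qInt q₁ n₁ + β)) ∧
    Lop2 q₁ q₂ α β n₁ n₂ φ₁ φ₂ (fun _ v => v) x y =
      qInt q₂ n₂ * y / (qInt q₂ n₂ + β)
        + q₂ * (1 + 2 * α) / (qInt q₂ 2 * (qInt q₂ n₂ + β)) ∧
    Lop2 q₁ q₂ α β n₁ n₂ φ₁ φ₂ (fun u v => u ^ 2 + v ^ 2) x y =
      (qInt q₁ n₁ * qInt q₁ m₁ * x ^ 2 / (q₁ * (qInt q₁ n₁ + β) ^ 2)
          + qInt q₁ n₁ * (qInt q₁ 3 + q₁ * ((1 + 3 * α) * qInt q₁ 2 + 1)) * x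
              / (qInt q₁ 3 * (qInt q₁ n₁ + β) ^ 2)
          + q₁ ^ 2 * (1 + 3 * α + 3 * α ^ 2) / (qInt q₁ 3 * (qInt q₁ n₁ + β) ^ 2))
        + (qInt q₂ n₂ * qInt q₂ m₂ * y ^ 2 / (q₂ * (qInt q₂ n₂ + β) ^ 2)
            + qInt q₂ n₂ * (qInt q₂ 3 + q₂ * ((1 + 3 * α) * qInt q₂ 2 + 1)) * y
                / (qInt q₂ 3 * (qInt q₂ n₂ + β) ^ 2)
            + q₂ ^ 2 * (1 + 3 * α + 3 * α ^ 2) / (qInt q₂ 3 * (qInt q₂ n₂ + β) ^ 2)) := by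
  have hβ : 0 ≤ β := le_trans hα hαβ
  have hc₁ : 0 < qInt q₁ n₁ + β := add_pos_of_pos_of_nonneg (qInt_pos q₁ hq₁0 n₁ hn₁) hβ
  have hc₂ : 0 < qInt q₂ n₂ + β := add_pos_of_pos_of_nonneg (qInt_pos q₂ hq₂0 n₂ hn₂) hβ
  refine ⟨?_, ?_, ?_, ?_⟩
  · have hf : (fun _ _ : ℝ => (1 : ℝ)) =
        fun u v => (fun _ : ℝ => (1 : ℝ)) u * (fun _ : ℝ => (1 : ℝ)) v := by
      funext u v; simp
    rw [hf, Lop2_prod, hM₁.1, hM₂.1, one_mul]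
  · have hf : (fun (u : ℝ) (_ : ℝ) => u) =
        fun u v => (fun t : ℝ => t) u * (fun _ : ℝ => (1 : ℝ)) v := by
      funext u v; simp
    rw [hf, Lop2_prod, hM₁.2.1, hM₂.1, mul_one]
  · have hf : (fun (_ : ℝ) (v : ℝ) => v) =
        fun u v => (fun _ : ℝ => (1 : ℝ)) u * (fun t : ℝ => t) v := by
      funext u v; simp
    rw [hf, Lop2_prod, hM₁.1, hM₂.2.1, one_mul]
  · -- second moments
    have h10 : (qInt q₁ n₁ + β) * ∑' k : ℕ, w q₁ φ₁ k x * Aterm q₁ α β n₁ k = 1 := by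
      rw [← Lop_one_eq q₁ α β hq₁0.le hq₁1]; exact hM₁.1
    have h20 : (qInt q₂ n₂ + β) * ∑' k : ℕ, w q₂ φ₂ k y * Aterm q₂ α β n₂ k = 1 := by
      rw [← Lop_one_eq q₂ α β hq₂0.le hq₂1]; exact hM₂.1
    have h12 : (qInt q₁ n₁ + β) * ∑' k : ℕ, w q₁ φ₁ k x * Cterm q₁ α β n₁ k =
        qInt q₁ n₁ * qInt q₁ m₁ * x ^ 2 / (q₁ * (qInt q₁ n₁ + β) ^ 2)
          + qInt q₁ n₁ * (qInt q₁ 3 + q₁ * ((1 + 3 * α) * qInt q₁ 2 + 1)) * x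
              / (qInt q₁ 3 * (qInt q₁ n₁ + β) ^ 2)
          + q₁ ^ 2 * (1 + 3 * α + 3 * α ^ 2) / (qInt q₁ 3 * (qInt q₁ n₁ + β) ^ 2) := by
      rw [← Lop_sq_eq q₁ α β hq₁0.le hq₁1]; exact hM₁.2.2
    have h22 : (qInt q₂ n₂ + β) * ∑' k : ℕ, w q₂ φ₂ k y * Cterm q₂ α β n₂ k =
        qInt q₂ n₂ * qInt q₂ m₂ * y ^ 2 / (q₂ * (qInt q₂ n₂ + β) ^ 2)
          + qInt q₂ n₂ * (qInt q₂ 3 + q₂ * ((1 + 3 * α) * qInt q₂ 2 + 1)) * y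
              / (qInt q₂ 3 * (qInt q₂ n₂ + β) ^ 2)
          + q₂ ^ 2 * (1 + 3 * α + 3 * α ^ 2) / (qInt q₂ 3 * (qInt q₂ n₂ + β) ^ 2) := by
      rw [← Lop_sq_eq q₂ α β hq₂0.le hq₂1]; exact hM₂.2.2
    -- positivity of the second moment values
    have hV₁ : (0 : ℝ) <
        qInt q₁ n₁ * qInt q₁ m₁ * x ^ 2 / (q₁ * (qInt q₁ n₁ + β) ^ 2)
          + qInt q₁ n₁ * (qInt q₁ 3 + q₁ * ((1 + 3 * α) * qInt q₁ 2 + 1)) * x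
              / (qInt q₁ 3 * (qInt q₁ n₁ + β) ^ 2)
          + q₁ ^ 2 * (1 + 3 * α + 3 * α ^ 2) / (qInt q₁ 3 * (qInt q₁ n₁ + β) ^ 2) := by
      have h3 : 0 < qInt q₁ 3 := qInt_pos q₁ hq₁0 3 (by norm_num)
      have hn' : 0 ≤ qInt q₁ n₁ := qInt_nonneg q₁ hq₁0.le n₁
      have hm' : 0 ≤ qInt q₁ m₁ := qInt_nonneg q₁ hq₁0.le m₁
      have h2 : 0 ≤ qInt q₁ 2 := qInt_nonneg q₁ hq₁0.le 2
      have t1 : (0:ℝ) ≤ qInt q₁ n₁ * qInt q₁ m₁ * x ^ 2 / (q₁ * (qInt q₁ n₁ + β) ^ 2) :=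
        div_nonneg (mul_nonneg (mul_nonneg hn' hm') (sq_nonneg x))
          (mul_nonneg hq₁0.le (sq_nonneg _))
      have t2 : (0:ℝ) ≤ qInt q₁ n₁ * (qInt q₁ 3 + q₁ * ((1 + 3 * α) * qInt q₁ 2 + 1)) * x
          / (qInt q₁ 3 * (qInt q₁ n₁ + β) ^ 2) :=
        div_nonneg (mul_nonneg (mul_nonneg hn'
          (add_nonneg h3.le (mul_nonneg hq₁0.le
            (add_nonneg (mul_nonneg (by linarith) h2) zero_le_one)))) hx)
          (mul_nonneg h3.le (sq_nonneg _))
      have t3 : (0:ℝ) < q₁ ^ 2 * (1 + 3 * α + 3 * α ^ 2) / (qInt q₁ 3 * (qInt q₁ n₁ + β) ^ 2) :=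
        div_pos (mul_pos (pow_pos hq₁0 2) (by nlinarith [sq_nonneg α]))
          (mul_pos h3 (pow_pos hc₁ 2))
      linarith
    have hV₂ : (0 : ℝ) <
        qInt q₂ n₂ * qInt q₂ m₂ * y ^ 2 / (q₂ * (qInt q₂ n₂ + β) ^ 2)
          + qInt q₂ n₂ * (qInt q₂ 3 + q₂ * ((1 + 3 * α) * qInt q₂ 2 + 1)) * y
              / (qInt q₂ 3 * (qInt q₂ n₂ + β) ^ 2)
          + q₂ ^ 2 * (1 + 3 * α + 3 * α ^ 2) / (qInt q₂ 3 * (qInt q₂ n₂ + β) ^ 2) := by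
      have h3 : 0 < qInt q₂ 3 := qInt_pos q₂ hq₂0 3 (by norm_num)
      have hn' : 0 ≤ qInt q₂ n₂ := qInt_nonneg q₂ hq₂0.le n₂
      have hm' : 0 ≤ qInt q₂ m₂ := qInt_nonneg q₂ hq₂0.le m₂
      have h2 : 0 ≤ qInt q₂ 2 := qInt_nonneg q₂ hq₂0.le 2
      have t1 : (0:ℝ) ≤ qInt q₂ n₂ * qInt q₂ m₂ * y ^ 2 / (q₂ * (qInt q₂ n₂ + β) ^ 2) :=
        div_nonneg (mul_nonneg (mul_nonneg hn' hm') (sq_nonneg y))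
          (mul_nonneg hq₂0.le (sq_nonneg _))
      have t2 : (0:ℝ) ≤ qInt q₂ n₂ * (qInt q₂ 3 + q₂ * ((1 + 3 * α) * qInt q₂ 2 + 1)) * y
          / (qInt q₂ 3 * (qInt q₂ n₂ + β) ^ 2) :=
        div_nonneg (mul_nonneg (mul_nonneg hn'
          (add_nonneg h3.le (mul_nonneg hq₂0.le
            (add_nonneg (mul_nonneg (by linarith) h2) zero_le_one)))) hy)
          (mul_nonneg h3.le (sq_nonneg _))
      have t3 : (0:ℝ) < q₂ ^ 2 * (1 + 3 * α + 3 * α ^ 2) / (qInt q₂ 3 * (qInt q₂ n₂ + β) ^ 2) :=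
        div_pos (mul_pos (pow_pos hq₂0 2) (by nlinarith [sq_nonneg α]))
          (mul_pos h3 (pow_pos hc₂ 2))
      linarith
    -- summability
    have hSA₁ : Summable (fun k : ℕ => w q₁ φ₁ k x * Aterm q₁ α β n₁ k) := by
      apply Summable.of_tsum_ne_zero
      intro h0
      rw [h0, mul_zero] at h10
      exact zero_ne_one h10
    have hSA₂ : Summable (fun k : ℕ => w q₂ φ₂ k y * Aterm q₂ α β n₂ k) := by
      apply Summable.of_tsum_ne_zero
      intro h0
      rw [h0, mul_zero] at h20
      exact zero_ne_one h20
    have hSC₁ : Summable (fun k : ℕ => w q₁ φ₁ k x * Cterm q₁ α β n₁ k) := by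
      apply Summable.of_tsum_ne_zero
      intro h0
      rw [h0, mul_zero] at h12
      exact hV₁.ne' h12.symm
    have hSC₂ : Summable (fun k : ℕ => w q₂ φ₂ k y * Cterm q₂ α β n₂ k) := by
      apply Summable.of_tsum_ne_zero
      intro h0
      rw [h0, mul_zero] at h22
      exact hV₂.ne' h22.symm
    -- main computation
    simp only [Lop2]
    have inner_eq : ∀ k₁ : ℕ,
        (∑' k₂ : ℕ, w q₁ φ₁ k₁ x * w q₂ φ₂ k₂ y *
          jackson q₁ (aNode q₁ α β n₁ k₁) (bNode q₁ α β n₁ k₁) (fun t =>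
            jackson q₂ (aNode q₂ α β n₂ k₂) (bNode q₂ α β n₂ k₂) (fun s =>
              (q₁ ^ (1 - (k₁ : ℤ)) * t) ^ 2 + (q₂ ^ (1 - (k₂ : ℤ)) * s) ^ 2))) =
        (w q₁ φ₁ k₁ x * Cterm q₁ α β n₁ k₁) *
            (∑' k : ℕ, w q₂ φ₂ k y * Aterm q₂ α β n₂ k) +
          (w q₁ φ₁ k₁ x * Aterm q₁ α β n₁ k₁) *
            (∑' k : ℕ, w q₂ φ₂ k y * Cterm q₂ α β n₂ k) := by
      intro k₁
      have hfe : (fun k₂ : ℕ => w q₁ φ₁ k₁ x * w q₂ φ₂ k₂ y *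
          jackson q₁ (aNode q₁ α β n₁ k₁) (bNode q₁ α β n₁ k₁) (fun t =>
            jackson q₂ (aNode q₂ α β n₂ k₂) (bNode q₂ α β n₂ k₂) (fun s =>
              (q₁ ^ (1 - (k₁ : ℤ)) * t) ^ 2 + (q₂ ^ (1 - (k₂ : ℤ)) * s) ^ 2))) =
          (fun k₂ : ℕ =>
            (w q₁ φ₁ k₁ x * Cterm q₁ α β n₁ k₁) * (w q₂ φ₂ k₂ y * Aterm q₂ α β n₂ k₂) +
            (w q₁ φ₁ k₁ x * Aterm q₁ α β n₁ k₁) * (w q₂ φ₂ k₂ y * Cterm q₂ α β n₂ k₂)) := by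
        funext k₂
        rw [jackson2_key q₁ q₂ α β hq₁0.le hq₁1 hq₂0.le hq₂1]
        ring
      rw [hfe, Summable.tsum_add (hSA₂.mul_left _) (hSC₂.mul_left _), tsum_mul_left, tsum_mul_left]
    rw [tsum_congr inner_eq,
      Summable.tsum_add (hSC₁.mul_right _) (hSA₁.mul_right _), tsum_mul_right, tsum_mul_right]
    rw [show (qInt q₁ n₁ + β) * (qInt q₂ n₂ + β) *
        ((∑' k : ℕ, w q₁ φ₁ k x * Cterm q₁ α β n₁ k) *
            (∑' k : ℕ, w q₂ φ₂ k y * Aterm q₂ α β n₂ k) +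
          (∑' k : ℕ, w q₁ φ₁ k x * Aterm q₁ α β n₁ k) *
            (∑' k : ℕ, w q₂ φ₂ k y * Cterm q₂ α β n₂ k)) =
        ((qInt q₁ n₁ + β) * ∑' k : ℕ, w q₁ φ₁ k x * Cterm q₁ α β n₁ k) *
            ((qInt q₂ n₂ + β) * ∑' k : ℕ, w q₂ φ₂ k y * Aterm q₂ α β n₂ k) +
          ((qInt q₁ n₁ + β) * ∑' k : ℕ, w q₁ φ₁ k x * Aterm q₁ α β n₁ k) *
            ((qInt q₂ n₂ + β) * ∑' k : ℕ, w q₂ φ₂ k y * Cterm q₂ α β n₂ k) from by ring,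
      h12, h20, h10, h22]
    ring

end
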